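/- arXiv:math/0112060 — 8 statements merged into one kernel-verified Lean document; each statement's English description precedes it below -/
import Mathlib

section
/- Let A = ℂ[h₂]/(h₂²) and let R = R_{h₂} be the 4×4 matrix over A with rows (1,−h₂,h₂,0), (0,1,0,h₂), (0,0,1,h₂), (0,0,0,1). Define the ungraded embeddings R₁₂ = R ⊗ I₂, R₂₃ = I₂ ⊗ R, and R₁₃ with entries (R₁₃)^{abc}_{def} = R^{ac}_{df} δ^b_e (no signs). Then the ungraded Yang–Baxter equation R₁₂ R₁₃ R₂₃ = R₂₃ R₁₃ R₁₂ holds. -/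
noncomputable section

open Matrix DualNumber

/-- The ring `A = ℂ[h₂]/(h₂²)` of dual numbers. -/
abbrev A2 := DualNumber ℂ

/-- `h₂`. -/
def h2 : A2 := DualNumber.eps

/-- Pairs `(a,b)` with `a,b ∈ {0,1}` indexed in the order (0,0),(0,1),(1,0),(1,1). -/
def pr (a b : Fin 2) : Fin 4 := ⟨2 * a.val + b.val, by omega⟩

/-- The 4×4 matrix `R_{h₂}`. -/
def Rh2 : Matrix (Fin 4) (Fin 4) A2 :=
  !![1, -h2, h2, 0;
     0, 1, 0, h2;
     0, 0, 1, h2;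
     0, 0, 0, 1]

/-- Entry `R^{ab}_{de}` of `R_{h₂}`. -/
def Rf (a b d e : Fin 2) : A2 := Rh2 (pr a b) (pr d e)

/-- `R₁₂ = R ⊗ I₂`: `(R₁₂)^{abc}_{def} = R^{ab}_{de} δ^c_f`. -/
def R12 : Matrix (Fin 2 × Fin 2 × Fin 2) (Fin 2 × Fin 2 × Fin 2) A2 :=
  Matrix.of fun p q => if p.2.2 = q.2.2 then Rf p.1 p.2.1 q.1 q.2.1 else 0

/-- `(R₁₃)^{abc}_{def} = R^{ac}_{df} δ^b_e` (no signs). -/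
def R13 : Matrix (Fin 2 × Fin 2 × Fin 2) (Fin 2 × Fin 2 × Fin 2) A2 :=
  Matrix.of fun p q => if p.2.1 = q.2.1 then Rf p.1 p.2.2 q.1 q.2.2 else 0

/-- `R₂₃ = I₂ ⊗ R`: `(R₂₃)^{abc}_{def} = δ^a_d R^{bc}_{ef}`. -/
def R23 : Matrix (Fin 2 × Fin 2 × Fin 2) (Fin 2 × Fin 2 × Fin 2) A2 :=
  Matrix.of fun p q => if p.1 = q.1 then Rf p.2.1 p.2.2 q.2.1 q.2.2 else 0

/-- The nilpotent part: `R = 1 + h₂ • N`. -/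
def Nf (a b d e : Fin 2) : A2 :=
  (!![0, -1, 1, 0; 0, 0, 0, 1; 0, 0, 0, 1; 0, 0, 0, 0] : Matrix (Fin 4) (Fin 4) A2)
    (pr a b) (pr d e)

lemma Rf_decomp (a b d e : Fin 2) :
    Rf a b d e = (if a = d ∧ b = e then 1 else 0) + h2 * Nf a b d e := by
  fin_cases a <;> fin_cases b <;> fin_cases d <;> fin_cases e <;>
    simp [Rf, Nf, Rh2, pr, h2] <;> simp [Matrix.vecHead, Matrix.vecTail]

def S12 : Matrix (Fin 2 × Fin 2 × Fin 2) (Fin 2 × Fin 2 × Fin 2) A2 :=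
  Matrix.of fun p q => if p.2.2 = q.2.2 then Nf p.1 p.2.1 q.1 q.2.1 else 0

def S13 : Matrix (Fin 2 × Fin 2 × Fin 2) (Fin 2 × Fin 2 × Fin 2) A2 :=
  Matrix.of fun p q => if p.2.1 = q.2.1 then Nf p.1 p.2.2 q.1 q.2.2 else 0

def S23 : Matrix (Fin 2 × Fin 2 × Fin 2) (Fin 2 × Fin 2 × Fin 2) A2 :=
  Matrix.of fun p q => if p.1 = q.1 then Nf p.2.1 p.2.2 q.2.1 q.2.2 else 0

lemma R12_eq : R12 = 1 + h2 • S12 := by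
  apply Matrix.ext
  rintro ⟨a,b,c⟩ ⟨d,e,f⟩
  simp only [R12, S12, Matrix.of_apply, Matrix.add_apply, Matrix.smul_apply,
    Matrix.one_apply, Prod.mk.injEq, Rf_decomp, smul_eq_mul]
  by_cases hc : c = f <;> by_cases hab : a = d ∧ b = e <;>
    simp [hc, hab, and_assoc, and_comm, and_left_comm] <;> tauto

lemma R13_eq : R13 = 1 + h2 • S13 := by
  apply Matrix.ext
  rintro ⟨a,b,c⟩ ⟨d,e,f⟩
  simp only [R13, S13, Matrix.of_apply, Matrix.add_apply, Matrix.smul_apply,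
    Matrix.one_apply, Prod.mk.injEq, Rf_decomp, smul_eq_mul]
  by_cases hc : b = e <;> by_cases hab : a = d ∧ c = f <;>
    simp [hc, hab, and_assoc, and_comm, and_left_comm] <;> tauto

lemma R23_eq : R23 = 1 + h2 • S23 := by
  apply Matrix.ext
  rintro ⟨a,b,c⟩ ⟨d,e,f⟩
  simp only [R23, S23, Matrix.of_apply, Matrix.add_apply, Matrix.smul_apply,
    Matrix.one_apply, Prod.mk.injEq, Rf_decomp, smul_eq_mul]
  by_cases hc : a = d <;> by_cases hab : b = e ∧ c = f <;>
    simp [hc, hab, and_assoc, and_comm, and_left_comm] <;> tauto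

set_option synthInstance.maxHeartbeats 400000 in
lemma smul_mul_smul_eq_zero (X Y : Matrix (Fin 2 × Fin 2 × Fin 2) (Fin 2 × Fin 2 × Fin 2) A2) :
    (h2 • X) * (h2 • Y) = 0 := by
  rw [Matrix.smul_mul, Matrix.mul_smul, smul_smul]
  simp [h2, DualNumber.eps_mul_eps]

lemma expand3 {M : Type*} [Ring M] (x y z : M) (hxy : x*y = 0) (hxz : x*z = 0)
    (hyz : y*z = 0) : (1+x)*(1+y)*(1+z) = 1+x+y+z := by
  have h : (1+x)*(1+y)*(1+z) = 1+x+y+z + (x*y + x*z + y*z + x*y*z) := by noncomm_ring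
  rw [h, hxy, hxz, hyz, zero_mul]
  abel

/-- the ungraded Yang–Baxter equation for `R_{h₂}`. -/
theorem stmt_3 : R12 * R13 * R23 = R23 * R13 * R12 := by
  rw [R12_eq, R13_eq, R23_eq,
    expand3 _ _ _ (smul_mul_smul_eq_zero S12 S13) (smul_mul_smul_eq_zero S12 S23)
      (smul_mul_smul_eq_zero S13 S23),
    expand3 _ _ _ (smul_mul_smul_eq_zero S23 S13) (smul_mul_smul_eq_zero S23 S12)
      (smul_mul_smul_eq_zero S13 S12)]
  abel
end
end

section
/- Let A = ℂ[h₁]/(h₁²), let R = R_{h₁} be the 4×4 matrix with rows (1,0,0,0), (−h₁,1,0,0), (h₁,0,1,0), (0,h₁,h₁,1), let P be the super permutation matrix with P^{ij}_{kl} = (−1)^{ij} δ^i_l δ^j_k, and set R̂ = P·R. With the graded embeddings R̂₁₂, R̂₂₃ defined by (R̂₁₂)^{abc}_{def} = R̂^{ab}_{de} δ^c_f and (R̂₂₃)^{abc}_{def} = (−1)^{a(b+c+e+f)} R̂^{bc}_{ef} δ^a_d, the graded braid equation R̂₁₂ R̂₂₃ R̂₁₂ = R̂₂₃ R̂₁₂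 R̂₂₃ holds. -/
noncomputable section

open Matrix DualNumber

/-- The ring `A = ℂ[h₁]/(h₁²)` of dual numbers. -/
abbrev A1 := DualNumber ℂ

/-- `h₁`. -/
def h1 : A1 := DualNumber.eps

/-- The 4×4 matrix `R_{h₁}`. -/
def Rh1 : Matrix (Fin 4) (Fin 4) A1 :=
  !![1, 0, 0, 0;
     -h1, 1, 0, 0;
     h1, 0, 1, 0;
     0, h1, h1, 1]

/-- The super permutation matrix `P`, `P^{ij}_{kl} = (−1)^{ij} δ^i_l δ^j_k`. -/
def Psuper : Matrix (Fin 4) (Fin 4) A1 :=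
  !![1, 0, 0, 0;
     0, 0, 1, 0;
     0, 1, 0, 0;
     0, 0, 0, -1]

/-- `R̂ = P·R`. -/
def Rhat : Matrix (Fin 4) (Fin 4) A1 := Psuper * Rh1

/-- Entry `R̂^{ab}_{de}`. -/
def Rhf (a b d e : Fin 2) : A1 := Rhat (pr a b) (pr d e)

/-- `(R̂₁₂)^{abc}_{def} = R̂^{ab}_{de} δ^c_f`. -/
def Rhat12 : Matrix (Fin 2 × Fin 2 × Fin 2) (Fin 2 × Fin 2 × Fin 2) A1 :=
  Matrix.of fun p q => if p.2.2 = q.2.2 then Rhf p.1 p.2.1 q.1 q.2.1 else 0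

/-- `(R̂₂₃)^{abc}_{def} = (−1)^{a(b+c+e+f)} R̂^{bc}_{ef} δ^a_d`. -/
def Rhat23 : Matrix (Fin 2 × Fin 2 × Fin 2) (Fin 2 × Fin 2 × Fin 2) A1 :=
  Matrix.of fun p q =>
    (-1 : A1) ^ (p.1.val * (p.2.1.val + p.2.2.val + q.2.1.val + q.2.2.val)) *
      (if p.1 = q.1 then Rhf p.2.1 p.2.2 q.2.1 q.2.2 else 0)

/-!
The braid equation for `P R_e` is a polynomial identity in the entries, and `e` enters only
through `e² = 0`. So it suffices to check it once for the universal square-zero element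
`ε ∈ ℤ[ε]`, where it is a finite integer computation, and to transport it along the ring
hom `ℤ[ε] → A` sending `ε ↦ h₁`, which commutes with forming `R̂₁₂` and `R̂₂₃`.
-/

section GradedBraid

variable {S T : Type*} [Ring S] [Ring T]

def rMatrix (e : S) : Matrix (Fin 4) (Fin 4) S :=
  !![1, 0, 0, 0;
     -e, 1, 0, 0;
     e, 0, 1, 0;
     0, e, e, 1]

def superPerm : Matrix (Fin 4) (Fin 4) S :=
  !![1, 0, 0, 0;
     0, 0, 1, 0;
     0, 1, 0, 0;
     0, 0, 0, -1]

def gradedEmbed12 (R : Matrix (Fin 4) (Fin 4) S) :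
    Matrix (Fin 2 × Fin 2 × Fin 2) (Fin 2 × Fin 2 × Fin 2) S :=
  Matrix.of fun p q => if p.2.2 = q.2.2 then R (pr p.1 p.2.1) (pr q.1 q.2.1) else 0

def gradedEmbed23 (R : Matrix (Fin 4) (Fin 4) S) :
    Matrix (Fin 2 × Fin 2 × Fin 2) (Fin 2 × Fin 2 × Fin 2) S :=
  Matrix.of fun p q =>
    (-1 : S) ^ (p.1.val * (p.2.1.val + p.2.2.val + q.2.1.val + q.2.2.val)) *
      (if p.1 = q.1 then R (pr p.2.1 p.2.2) (pr q.2.1 q.2.2) else 0)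

def IsGradedBraid (R : Matrix (Fin 4) (Fin 4) S) : Prop :=
  gradedEmbed12 R * gradedEmbed23 R * gradedEmbed12 R =
    gradedEmbed23 R * gradedEmbed12 R * gradedEmbed23 R

theorem map_rMatrix (f : S →+* T) (e : S) : (rMatrix e).map f = rMatrix (f e) := by
  ext i j
  fin_cases i <;> fin_cases j <;> simp [rMatrix]

theorem map_superPerm (f : S →+* T) : (superPerm : Matrix (Fin 4) (Fin 4) S).map f = superPerm := by
  ext i j
  fin_cases i <;> fin_cases j <;> simp [superPerm]

theorem map_gradedEmbed12 (f : S →+* T) (R : Matrix (Fin 4) (Fin 4) S) :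
    (gradedEmbed12 R).map f = gradedEmbed12 (R.map f) := by
  ext p q
  simp only [gradedEmbed12, map_apply, of_apply]
  split_ifs <;> simp

theorem map_gradedEmbed23 (f : S →+* T) (R : Matrix (Fin 4) (Fin 4) S) :
    (gradedEmbed23 R).map f = gradedEmbed23 (R.map f) := by
  ext p q
  simp only [gradedEmbed23, map_apply, of_apply]
  split_ifs <;> simp

theorem IsGradedBraid.map {R : Matrix (Fin 4) (Fin 4) S} (h : IsGradedBraid R) (f : S →+* T) :
    IsGradedBraid (R.map f) := by
  unfold IsGradedBraid at h ⊢
  simp only [← map_gradedEmbed12, ← map_gradedEmbed23, ← Matrix.map_mul, h]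

end GradedBraid

-- `ℤ[ε]` is `ℤ × ℤ` underneath, which makes the braid equation over it decidable by computation.
instance : DecidableEq (DualNumber ℤ) := inferInstanceAs (DecidableEq (ℤ × ℤ))

theorem isGradedBraid_superPerm_mul_rMatrix_eps :
    IsGradedBraid (superPerm * rMatrix (ε : DualNumber ℤ)) := by
  unfold IsGradedBraid
  decide

theorem isGradedBraid_superPerm_mul_rMatrix {S : Type*} [Ring S] {e : S} (he : e * e = 0) :
    IsGradedBraid (superPerm * rMatrix e) := by
  let f : DualNumber ℤ →+* S :=
    DualNumber.lift ⟨(Algebra.ofId ℤ S, e), he, fun a => (Algebra.commutes a e).symm⟩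
  have hf : f ε = e := DualNumber.lift_apply_eps _
  have := isGradedBraid_superPerm_mul_rMatrix_eps.map f
  rwa [Matrix.map_mul, map_superPerm, map_rMatrix, hf] at this

/-- the graded braid equation for `R̂_{h₁} = P R_{h₁}`. -/
theorem stmt_5 : Rhat12 * Rhat23 * Rhat12 = Rhat23 * Rhat12 * Rhat23 :=
  isGradedBraid_superPerm_mul_rMatrix (e := h1) DualNumber.eps_mul_eps
end
end

section
/- Let B be an associative unital ℂ-superalgebra containing odd elements h₁, h₂ with h₁² = h₂² = 0 and h₁h₂ = −h₂h₁, even elements a, d and odd elements β, γ, such that h₁ and h₂ anticommute with β and γ and commute with a and d, and such that the GL_{h₁,h₂}(1|1) relations hold: aβ = βa − h₂(a² − βγ − ad); dβ = βd + h₂(d² + βγ − da); aγ = γa + h₁(a² + γβ − ad); dγ = γd − h₁(d² − γβ − da); β² = h₂β(a−d); γ² = h₁γ(d−a); βγ = −γβ + (h₁β − h₂γ)(d−a); ad = da + (h₁β + h₂γ)(a−d) − h₁h₂(a² − 2da + d²). Then ad = da + h₁β(a−d) + h₂(a−d)γ. -/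
/-- in a ℂ-superalgebra with Grassmann parameters `h₁, h₂` and
generators `a, β, γ, d` satisfying the GL_{h₁,h₂}(1|1) relations (17), the last
relation can be rewritten as `ad = da + h₁β(a−d) + h₂(a−d)γ` (eq. (27)). -/
theorem stmt_9 (B : Type*) [Ring B] [Algebra ℂ B]
    (h1 h2 a d β γ : B)
    (hh1 : h1 * h1 = 0) (hh2 : h2 * h2 = 0) (hanti : h1 * h2 = -(h2 * h1))
    (h1β : h1 * β = -(β * h1)) (h1γ : h1 * γ = -(γ * h1))
    (h2β : h2 * β = -(β * h2)) (h2γ : h2 * γ = -(γ * h2))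
    (h1a : h1 * a = a * h1) (h1d : h1 * d = d * h1)
    (h2a : h2 * a = a * h2) (h2d : h2 * d = d * h2)
    (r1 : a * β = β * a - h2 * (a * a - β * γ - a * d))
    (r2 : d * β = β * d + h2 * (d * d + β * γ - d * a))
    (r3 : a * γ = γ * a + h1 * (a * a + γ * β - a * d))
    (r4 : d * γ = γ * d - h1 * (d * d - γ * β - d * a))
    (r5 : β * β = h2 * β * (a - d))
    (r6 : γ * γ = h1 * γ * (d - a))
    (r7 : β * γ = -(γ * β) + (h1 * β - h2 * γ) * (d - a))
    (r8 : a * d = d * a + (h1 * β + h2 * γ) * (a - d)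
            - h1 * h2 * (a * a - 2 * (d * a) + d * d)) :
    a * d = d * a + h1 * β * (a - d) + h2 * (a - d) * γ := by
  have hanti' : h2 * h1 = -(h1 * h2) := by rw [hanti, neg_neg]
  have e1 : ∀ x : B, h1 * (h2 * (h1 * x)) = 0 := by
    intro x
    rw [← mul_assoc, ← mul_assoc, hanti, neg_mul, neg_mul, mul_assoc h2 h1 h1, hh1,
      mul_zero, zero_mul, neg_zero]
  have e2 : ∀ x : B, h1 * (h2 * (h2 * x)) = 0 := by
    intro x
    rw [← mul_assoc h2 h2 x, hh2, zero_mul, mul_zero]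
  have e3 : h1 * h2 * (a * d) = h1 * h2 * (d * a) := by
    rw [r8, mul_assoc]
    simp only [mul_add, mul_sub, add_mul, sub_mul, mul_assoc, e1, e2]
    noncomm_ring
  have E : h2 * (a * γ) = h2 * γ * a - h1 * h2 * (a * a + γ * β - a * d) := by
    rw [r3, mul_add, ← mul_assoc h2 h1, hanti']
    noncomm_ring
  have F : h2 * (d * γ) = h2 * γ * d + h1 * h2 * (d * d - γ * β - d * a) := by
    rw [r4, mul_sub, ← mul_assoc h2 h1, hanti']
    noncomm_ring
  have key : h2 * (a - d) * γ
      = h2 * γ * (a - d) - h1 * h2 * (a * a + d * d - a * d - d * a) := by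
    rw [mul_sub h2 a d, sub_mul, mul_assoc, mul_assoc, E, F]
    noncomm_ring
  rw [r8, key]
  have edist : h1 * h2 * (a * a - 2 * (d * a) + d * d)
      = h1 * h2 * (a * a + d * d - a * d - d * a) := by
    simp only [mul_add, mul_sub, e3]
    noncomm_ring
  rw [edist]
  noncomm_ring
end

section
/- Let B be an associative unital ℂ-superalgebra containing odd elements h₁, h₂ with h₁² = h₂² = 0, h₁h₂ = 0 = h₂h₁, even elements a, d with two-sided inverses a⁻¹, d⁻¹, and odd elements β, γ, such that h₁, h₂ anticommute with β, γ and commute with a, d, and the relations (17) of GL_{h₁,h₂}(1|1) hold (as listed in the context). Then the superdeterminant identity a d⁻¹ − β d⁻¹ γ d⁻¹ = d⁻¹ a − d⁻¹ β d⁻¹ γ holds in B. -/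
/-- under the GL_{h₁,h₂}(1|1) relations (17) (with `h₁h₂ = 0`),
and with two-sided inverses `a⁻¹, d⁻¹`, the superdeterminant identity
`a d⁻¹ − β d⁻¹ γ d⁻¹ = d⁻¹ a − d⁻¹ β d⁻¹ γ` holds (eq. (25)). -/
theorem stmt_10 (B : Type*) [Ring B] [Algebra ℂ B]
    (h1 h2 a d ai di β γ : B)
    (hh1 : h1 * h1 = 0) (hh2 : h2 * h2 = 0)
    (h12 : h1 * h2 = 0) (h21 : h2 * h1 = 0)
    (hai : a * ai = 1) (hia : ai * a = 1)
    (hdi : d * di = 1) (hid : di * d = 1)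
    (h1β : h1 * β = -(β * h1)) (h1γ : h1 * γ = -(γ * h1))
    (h2β : h2 * β = -(β * h2)) (h2γ : h2 * γ = -(γ * h2))
    (h1a : h1 * a = a * h1) (h1d : h1 * d = d * h1)
    (h2a : h2 * a = a * h2) (h2d : h2 * d = d * h2)
    (r1 : a * β = β * a - h2 * (a * a - β * γ - a * d))
    (r2 : d * β = β * d + h2 * (d * d + β * γ - d * a))
    (r3 : a * γ = γ * a + h1 * (a * a + γ * β - a * d))
    (r4 : d * γ = γ * d - h1 * (d * d - γ * β - d * a))
    (r5 : β * β = h2 * β * (a - d))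
    (r6 : γ * γ = h1 * γ * (d - a))
    (r7 : β * γ = -(γ * β) + (h1 * β - h2 * γ) * (d - a))
    (r8 : a * d = d * a + (h1 * β + h2 * γ) * (a - d)) :
    a * di - β * di * γ * di = di * a - di * β * di * γ := by 
  have z1 : (h1 * β * h1) = 0 := by
    linear_combination (norm := noncomm_ring) (1) * h1β * (h1) +
      (-β) * hh1 * (1)
  have z2 : (h1 * β * h2) = 0 := by
    linear_combination (norm := noncomm_ring) (1) * h1β * (h2) +
      (-β) * h12 * (1)
  have z3 : (h1 * β * γ * h2) = 0 := by
    linear_combination (norm := noncomm_ring) (h1 * β) * h2γ * (1) +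
      (-1) * z2 * (γ)
  have z4 : (h2 * β * h1) = 0 := by
    linear_combination (norm := noncomm_ring) (1) * h2β * (h1) +
      (-β) * h21 * (1)
  have z5 : (h2 * β * γ * h1) = 0 := by
    linear_combination (norm := noncomm_ring) (h2 * β) * h1γ * (1) +
      (-1) * z4 * (γ)
  have z6 : (h1 * γ * h2) = 0 := by
    linear_combination (norm := noncomm_ring) (1) * h1γ * (h2) +
      (-γ) * h12 * (1)
  have cd1 : (di * h1) = (h1 * di) := by
    linear_combination (norm := noncomm_ring) (-di * h1) * hdi * (1) +
      (di) * h1d * (di) +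
      (1) * hid * (h1 * di)
  have cd2 : (di * h2) = (h2 * di) := by
    linear_combination (norm := noncomm_ring) (-di * h2) * hdi * (1) +
      (di) * h2d * (di) +
      (1) * hid * (h2 * di)
  have k1 : (h1 * d * β) = (h1 * β * d) := by
    linear_combination (norm := noncomm_ring) (h1) * r2 * (1) +
      (1) * h12 * (d * d + β * γ - d * a)
  have k4 : (h2 * d * β) = (h2 * β * d) := by
    linear_combination (norm := noncomm_ring) (h2) * r2 * (1) +
      (1) * hh2 * (d * d + β * γ - d * a)
  have k2 : (h1 * β * d * γ) = (h1 * β * γ * d) := by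
    linear_combination (norm := noncomm_ring) (h1 * β) * r4 * (1) +
      (-1) * z1 * (d * d - γ * β - d * a)
  have k3 : (h1 * β * γ * d * β) = (h1 * β * γ * β * d) := by
    linear_combination (norm := noncomm_ring) (h1 * β * γ) * r2 * (1) +
      (1) * z3 * (d * d + β * γ - d * a)
  have k5 : (h2 * β * d * γ) = (h2 * β * γ * d) := by
    linear_combination (norm := noncomm_ring) (h2 * β) * r4 * (1) +
      (-1) * z4 * (d * d - γ * β - d * a)
  have k6 : (h2 * β * γ * d * γ) = (h2 * β * γ * γ * d) := by
    linear_combination (norm := noncomm_ring) (h2 * β * γ) * r4 * (1) +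
      (-1) * z5 * (d * d - γ * β - d * a)
  have k7 : (h2 * d * γ) = (h2 * γ * d) := by
    linear_combination (norm := noncomm_ring) (h2) * r4 * (1) +
      (-1) * h21 * (d * d - γ * β - d * a)
  have k8 : (h2 * d * a) = (h2 * a * d) := by
    linear_combination (norm := noncomm_ring) (-h2) * r8 * (1) +
      (-1) * h21 * (β * a - β * d) +
      (-1) * hh2 * (γ * a - γ * d)
  have k9 : (h2 * a * γ) = (h2 * γ * a) := by
    linear_combination (norm := noncomm_ring) (h2) * r3 * (1) +
      (1) * h21 * (a * a + γ * β - a * d)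
  have vA : (h1 * β * γ * β) = 0 := by
    linear_combination (norm := noncomm_ring) (h1) * r7 * (β) +
      (1) * hh1 * (β * d * β - β * a * β) +
      (-1) * h12 * (γ * d * β - γ * a * β) +
      (-h1 * γ) * r5 * (1) +
      (-1) * z6 * (β * a - β * d)
  have vB : (h2 * β * γ * γ) = 0 := by
    linear_combination (norm := noncomm_ring) (h2 * β) * r6 * (1) +
      (1) * z4 * (γ * d - γ * a)
  have cm1 : (h1 * di) = (di * h1) := by
    linear_combination (norm := noncomm_ring) (-1) * cd1 * (1)
  have cm2 : (h2 * di) = (di * h2) := by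
    linear_combination (norm := noncomm_ring) (-1) * cd2 * (1)
  have c0 : (h1 * di * β) = (h1 * β * di) := by
    linear_combination (norm := noncomm_ring) (1) * cm1 * (β) +
      (-di * h1 * β) * hdi * (1) +
      (-di) * k1 * (di) +
      (-1) * cm1 * (d * β * di) +
      (h1) * hid * (β * di)
  have c0b : (h2 * di * β) = (h2 * β * di) := by
    linear_combination (norm := noncomm_ring) (1) * cm2 * (β) +
      (-di * h2 * β) * hdi * (1) +
      (-di) * k4 * (di) +
      (-1) * cm2 * (d * β * di) +
      (h2) * hid * (β * di)
  have cmA : (h1 * β * di) = (di * h1 * β) := by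
    linear_combination (norm := noncomm_ring) (-1) * cd1 * (β) +
      (-1) * c0 * (1)
  have c1 : (h1 * β * di * γ) = (h1 * β * γ * di) := by
    linear_combination (norm := noncomm_ring) (1) * cmA * (γ) +
      (-di * h1 * β * γ) * hdi * (1) +
      (-di) * k2 * (di) +
      (-1) * cmA * (d * γ * di) +
      (h1 * β) * hid * (γ * di)
  have cmB : (h1 * β * γ * di) = (di * h1 * β * γ) := by
    linear_combination (norm := noncomm_ring) (-1) * cd1 * (β * γ) +
      (-1) * c0 * (γ) +
      (-1) * c1 * (1)
  have c2 : (h1 * β * γ * di * β) = (h1 * β * γ * β * di) := by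
    linear_combination (norm := noncomm_ring) (1) * cmB * (β) +
      (-di * h1 * β * γ * β) * hdi * (1) +
      (-di) * k3 * (di) +
      (-1) * cmB * (d * β * di) +
      (h1 * β * γ) * hid * (β * di)
  have cmC : (h2 * β * di) = (di * h2 * β) := by
    linear_combination (norm := noncomm_ring) (-1) * cd2 * (β) +
      (-1) * c0b * (1)
  have c1b : (h2 * β * di * γ) = (h2 * β * γ * di) := by
    linear_combination (norm := noncomm_ring) (1) * cmC * (γ) +
      (-di * h2 * β * γ) * hdi * (1) +
      (-di) * k5 * (di) +
      (-1) * cmC * (d * γ * di) +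
      (h2 * β) * hid * (γ * di)
  have cmD : (h2 * β * γ * di) = (di * h2 * β * γ) := by
    linear_combination (norm := noncomm_ring) (-1) * cd2 * (β * γ) +
      (-1) * c0b * (γ) +
      (-1) * c1b * (1)
  have c3 : (h2 * β * γ * di * γ) = (h2 * β * γ * γ * di) := by
    linear_combination (norm := noncomm_ring) (1) * cmD * (γ) +
      (-di * h2 * β * γ * γ) * hdi * (1) +
      (-di) * k6 * (di) +
      (-1) * cmD * (d * γ * di) +
      (h2 * β * γ) * hid * (γ * di)
  have c4 : (h2 * di * a) = (h2 * a * di) := by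
    linear_combination (norm := noncomm_ring) (1) * cm2 * (a) +
      (-di * h2 * a) * hdi * (1) +
      (-di) * k8 * (di) +
      (-1) * cm2 * (d * a * di) +
      (h2) * hid * (a * di)
  have claimA : (h1 * β * di * d * d - h1 * β * di * γ * β - h1 * β * di * d * a) = (h1 * β * d - h1 * β * a) := by
    linear_combination (norm := noncomm_ring) (h1 * β) * hid * (d) +
      (-1) * c1 * (β) +
      (-1) * c2 * (1) +
      (-1) * vA * (di) +
      (-h1 * β) * hid * (a)
  have claimB : (h2 * d * d * di * γ + h2 * β * γ * di * γ - h2 * d * a * di * γ) = (h2 * γ * d - h2 * γ * a) := by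
    linear_combination (norm := noncomm_ring) (h2 * d) * hdi * (γ) +
      (1) * k7 * (1) +
      (1) * c3 * (1) +
      (1) * vB * (di) +
      (-1) * h2d * (a * di * γ) +
      (d) * c4 * (γ) +
      (d) * cd2 * (a * γ) +
      (-1) * hdi * (h2 * a * γ) +
      (-1) * k9 * (1)
  have key : (d * a - d * β * di * γ) = (a * d - β * di * γ * d) := by
    linear_combination (norm := noncomm_ring) (-1) * r8 * (1) +
      (-β * di) * r4 * (1) +
      (β) * hid * (γ) +
      (β) * cd1 * (d * d - γ * β - d * a) +
      (1) * h1β * (di * d * d - di * γ * β - di * d * a) +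
      (-1) * r2 * (di * γ) +
      (-β) * hdi * (γ) +
      (-1) * claimB * (1) +
      (-1) * claimA * (1)
  linear_combination (norm := noncomm_ring) (di) * key * (di) +
      (-1) * hid * (a * di) +
      (1) * hid * (β * di * γ * di) +
      (di * a) * hdi * (1) +
      (-di * β * di * γ) * hdi * (1)
end

section
/- Let B be an associative unital ℂ-superalgebra with odd elements h₁, h₂ (h₁² = h₂² = 0, h₁h₂ = 0 = h₂h₁), even elements a, d, odd elements β, γ satisfying the GL_{h₁,h₂}(1|1) relations (17) (with the simplified last relation ad = da + h₁β(a−d) + h₂(a−d)γ), where h₁, h₂ anticommute with β, γ and commute with a, d. Let x (even) and ξ (odd) generate a left B-comodule-type extension: assume x, ξ commute with a, d and that β, γ, h₁, h₂ anticommute with ξ and commute with x, and that xξ = ξx + h₁x², ξ² = −h₁xξ. Define x' = a x + β ξ and ξ' = γ x + d ξ. Then x'ξ' = ξ'x' + h₁ x'², and ξ'² = −h₁ x' ξ'. -/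
private lemma lift_mul {B : Type*} [Ring B] {u v w : B} (h : u * v = w) (t : B) :
    u * (v * t) = w * t := by rw [← mul_assoc, h]

set_option maxRecDepth 40000 in
/-- the coaction `x' = a x + β ξ`, `ξ' = γ x + d ξ` of
GL_{h₁,h₂}(1|1) preserves the relations of the `h₁`-deformed superplane
`xξ = ξx + h₁x²`, `ξ² = −h₁xξ` (eq. (11)). -/
theorem stmt_11 (B : Type*) [Ring B] [Algebra ℂ B]
    (h1 h2 a d β γ x ξ : B)
    (hh1 : h1 * h1 = 0) (hh2 : h2 * h2 = 0)
    (h12 : h1 * h2 = 0) (h21 : h2 * h1 = 0)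
    -- h's with the supergroup generators
    (h1β : h1 * β = -(β * h1)) (h1γ : h1 * γ = -(γ * h1))
    (h2β : h2 * β = -(β * h2)) (h2γ : h2 * γ = -(γ * h2))
    (h1a : h1 * a = a * h1) (h1d : h1 * d = d * h1)
    (h2a : h2 * a = a * h2) (h2d : h2 * d = d * h2)
    -- relations (17) with h₁h₂ = 0
    (r1 : a * β = β * a - h2 * (a * a - β * γ - a * d))
    (r2 : d * β = β * d + h2 * (d * d + β * γ - d * a))
    (r3 : a * γ = γ * a + h1 * (a * a + γ * β - a * d))
    (r4 : d * γ = γ * d - h1 * (d * d - γ * β - d * a))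
    (r5 : β * β = h2 * β * (a - d))
    (r6 : γ * γ = h1 * γ * (d - a))
    (r7 : β * γ = -(γ * β) + (h1 * β - h2 * γ) * (d - a))
    (r8 : a * d = d * a + h1 * β * (a - d) + h2 * (a - d) * γ)
    -- the superplane coordinates commute with a, d
    (ax : a * x = x * a) (dx : d * x = x * d)
    (aξ : a * ξ = ξ * a) (dξ : d * ξ = ξ * d)
    -- β, γ, h₁, h₂ anticommute with ξ and commute with x
    (βξ : β * ξ = -(ξ * β)) (γξ : γ * ξ = -(ξ * γ))
    (h1ξ : h1 * ξ = -(ξ * h1)) (h2ξ : h2 * ξ = -(ξ * h2))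
    (βx : β * x = x * β) (γx : γ * x = x * γ)
    (h1x : h1 * x = x * h1) (h2x : h2 * x = x * h2)
    -- superplane relations (11)
    (p1 : x * ξ = ξ * x + h1 * x * x)
    (p2 : ξ * ξ = -(h1 * x * ξ)) :
    (a * x + β * ξ) * (γ * x + d * ξ)
      = (γ * x + d * ξ) * (a * x + β * ξ)
        + h1 * ((a * x + β * ξ) * (a * x + β * ξ)) ∧
    (γ * x + d * ξ) * (γ * x + d * ξ)
      = -(h1 * ((a * x + β * ξ) * (γ * x + d * ξ))) := by
  -- reversed (anti)commutation facts
  have bh1 : β * h1 = -(h1 * β) := by rw [h1β, neg_neg]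
  have gh1 : γ * h1 = -(h1 * γ) := by rw [h1γ, neg_neg]
  have bh2 : β * h2 = -(h2 * β) := by rw [h2β, neg_neg]
  have gh2 : γ * h2 = -(h2 * γ) := by rw [h2γ, neg_neg]
  have ξh1 : ξ * h1 = -(h1 * ξ) := by rw [h1ξ, neg_neg]
  have ξh2 : ξ * h2 = -(h2 * ξ) := by rw [h2ξ, neg_neg]
  have ξβ : ξ * β = -(β * ξ) := by rw [βξ, neg_neg]
  have ξγ : ξ * γ = -(γ * ξ) := by rw [γξ, neg_neg]
  -- normal-ordered forms of the quadratic relations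
  have R7 : γ * β = -(β * γ) + h1 * (β * d) - h1 * (β * a)
      - h2 * (γ * d) + h2 * (γ * a) := by rw [r7]; noncomm_ring
  have R8o : d * a = a * d - h1 * (β * a) + h1 * (β * d)
      - h2 * (a * γ) + h2 * (d * γ) := by rw [r8]; noncomm_ring
  have R1 : a * β = β * a - h2 * (a * a) + h2 * (β * γ) + h2 * (a * d) := by
    rw [r1]; noncomm_ring
  have R2 : d * β = β * d + h2 * (d * d) + h2 * (β * γ) - h2 * (a * d) := by
    rw [r2, R8o]
    simp only [mul_add, mul_sub, mul_neg, add_mul, sub_mul, neg_mul, ← mul_assoc,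
      hh1, hh2, h12, h21, zero_mul, mul_zero]
    noncomm_ring
  have R3 : a * γ = γ * a + h1 * (a * a) - h1 * (β * γ) - h1 * (a * d) := by
    rw [r3, R7]
    simp only [mul_add, mul_sub, mul_neg, add_mul, sub_mul, neg_mul, ← mul_assoc,
      hh1, hh2, h12, h21, zero_mul, mul_zero]
    noncomm_ring
  have R4 : d * γ = γ * d - h1 * (d * d) - h1 * (β * γ) + h1 * (a * d) := by
    rw [r4, R7, R8o]
    simp only [mul_add, mul_sub, mul_neg, add_mul, sub_mul, neg_mul, ← mul_assoc,
      hh1, hh2, h12, h21, zero_mul, mul_zero]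
    noncomm_ring
  have R8 : d * a = a * d - h1 * (β * a) + h1 * (β * d)
      - h2 * (γ * a) + h2 * (γ * d) := by
    rw [R8o, r3, r4]
    simp only [mul_add, mul_sub, mul_neg, add_mul, sub_mul, neg_mul, ← mul_assoc,
      hh1, hh2, h12, h21, zero_mul, mul_zero]
    noncomm_ring
  have R5 : β * β = h2 * (β * a) - h2 * (β * d) := by rw [r5]; noncomm_ring
  have R6 : γ * γ = h1 * (γ * d) - h1 * (γ * a) := by rw [r6]; noncomm_ring
  have P1 : x * ξ = ξ * x + h1 * (x * x) := by rw [p1]; noncomm_ring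
  have P2 : ξ * ξ = -(h1 * (ξ * x)) := by
    rw [p2, mul_assoc, p1]
    simp only [mul_add, mul_sub, mul_neg, add_mul, sub_mul, neg_mul, ← mul_assoc,
      hh1, hh2, h12, h21, zero_mul, mul_zero]
    noncomm_ring
  constructor <;>
    · simp only [mul_add, add_mul, mul_sub, sub_mul, mul_neg, neg_mul, neg_neg,
        neg_add, neg_sub, mul_zero, zero_mul, mul_assoc,
        hh1, hh2, h12, h21,
        lift_mul hh1, lift_mul hh2, lift_mul h12, lift_mul h21,
        bh1, bh2, gh1, gh2, ξh1, ξh2, ξβ, ξγ,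
        lift_mul bh1, lift_mul bh2, lift_mul gh1, lift_mul gh2,
        lift_mul ξh1, lift_mul ξh2, lift_mul ξβ, lift_mul ξγ,
        h1a.symm, h1d.symm, h2a.symm, h2d.symm,
        lift_mul h1a.symm, lift_mul h1d.symm, lift_mul h2a.symm, lift_mul h2d.symm,
        neg_zero, add_zero, zero_add, sub_zero, zero_sub,
        ax.symm, dx.symm, aξ.symm, dξ.symm, βx.symm, γx.symm,
        h1x.symm, h2x.symm,
        lift_mul ax.symm, lift_mul dx.symm, lift_mul aξ.symm, lift_mul dξ.symm,
        lift_mul βx.symm, lift_mul γx.symm, lift_mul h1x.symm, lift_mul h2x.symm,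
        R1, R2, R3, R4, R5, R6, R7, R8, P1, P2,
        lift_mul R1, lift_mul R2, lift_mul R3, lift_mul R4, lift_mul R5,
        lift_mul R6, lift_mul R7, lift_mul R8, lift_mul P1, lift_mul P2]
      abel
end

section
/- With the same algebra B and GL_{h₁,h₂}(1|1) relations as in the superplane-covariance statement (relations (17) with h₁h₂ = 0), let η (odd) and y (even) satisfy η² = −h₂ηy and ηy = yη − h₂y², and assume that a and d commute with η and y, that βη = −ηβ, γη = −ηγ and h_iη = −ηh_i, and that βy = yβ, γy = yγ and h_i y = y h_i. Define η' = aη + βy and y' = γη + dy. Then η'² = −h₂η'y' and η'y' = y'η' − h₂y'². -/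
set_option maxRecDepth 8000
set_option maxHeartbeats 1000000

/-- the coaction `η' = a η + β y`, `y' = γ η + d y` of
GL_{h₁,h₂}(1|1) preserves the relations of the dual `h₂`-superplane
`η² = −h₂ηy`, `ηy = yη − h₂y²` (eq. (15)). -/
theorem stmt_12 (B : Type*) [Ring B] [Algebra ℂ B]
    (h1 h2 a d β γ η y : B)
    (hh1 : h1 * h1 = 0) (hh2 : h2 * h2 = 0)
    (h12 : h1 * h2 = 0) (h21 : h2 * h1 = 0)
    -- h's with the supergroup generators
    (h1β : h1 * β = -(β * h1)) (h1γ : h1 * γ = -(γ * h1))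
    (h2β : h2 * β = -(β * h2)) (h2γ : h2 * γ = -(γ * h2))
    (h1a : h1 * a = a * h1) (h1d : h1 * d = d * h1)
    (h2a : h2 * a = a * h2) (h2d : h2 * d = d * h2)
    -- relations (17) with h₁h₂ = 0
    (r1 : a * β = β * a - h2 * (a * a - β * γ - a * d))
    (r2 : d * β = β * d + h2 * (d * d + β * γ - d * a))
    (r3 : a * γ = γ * a + h1 * (a * a + γ * β - a * d))
    (r4 : d * γ = γ * d - h1 * (d * d - γ * β - d * a))
    (r5 : β * β = h2 * β * (a - d))
    (r6 : γ * γ = h1 * γ * (d - a))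
    (r7 : β * γ = -(γ * β) + (h1 * β - h2 * γ) * (d - a))
    (r8 : a * d = d * a + h1 * β * (a - d) + h2 * (a - d) * γ)
    -- a, d commute with η, y; y commutes with a, d
    (aη : a * η = η * a) (dη : d * η = η * d)
    (ay : a * y = y * a) (dy : d * y = y * d)
    -- odd elements anticommute with η, commute with y
    (βη : β * η = -(η * β)) (γη : γ * η = -(η * γ))
    (h1η : h1 * η = -(η * h1)) (h2η : h2 * η = -(η * h2))
    (βy : β * y = y * β) (γy : γ * y = y * γ)
    (h1y : h1 * y = y * h1) (h2y : h2 * y = y * h2)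
    -- dual superplane relations (15)
    (p1 : η * η = -(h2 * η * y))
    (p2 : η * y = y * η - h2 * y * y) :
    (a * η + β * y) * (a * η + β * y)
      = -(h2 * ((a * η + β * y) * (γ * η + d * y))) ∧
    (a * η + β * y) * (γ * η + d * y)
      = (γ * η + d * y) * (a * η + β * y)
        - h2 * ((γ * η + d * y) * (γ * η + d * y)) := by
  have q7 : h2 * (β * γ) = -(h2 * (γ * β)) := by rw [r7]; simp only [mul_add, add_mul, mul_sub, sub_mul, mul_neg, neg_mul, ← mul_assoc, hh1, hh2, h12, h21, zero_mul, mul_zero, sub_zero, add_zero, zero_add, neg_zero]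
  have q31 : h1 * (a * d) = h1 * (d * a) := by rw [r8]; simp only [mul_add, add_mul, mul_sub, sub_mul, mul_neg, neg_mul, ← mul_assoc, hh1, hh2, h12, h21, zero_mul, mul_zero, sub_zero, add_zero, zero_add, neg_zero]
  have q32 : h2 * (a * d) = h2 * (d * a) := by rw [r8]; simp only [mul_add, add_mul, mul_sub, sub_mul, mul_neg, neg_mul, ← mul_assoc, hh1, hh2, h12, h21, zero_mul, mul_zero, sub_zero, add_zero, zero_add, neg_zero]
  have q29 : h2 * (a * γ) = h2 * (γ * a) := by rw [r3]; simp only [mul_add, add_mul, mul_sub, sub_mul, mul_neg, neg_mul, ← mul_assoc, hh1, hh2, h12, h21, zero_mul, mul_zero, sub_zero, add_zero, zero_add, neg_zero]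
  have q30 : h2 * (d * γ) = h2 * (γ * d) := by rw [r4]; simp only [mul_add, add_mul, mul_sub, sub_mul, mul_neg, neg_mul, ← mul_assoc, hh1, hh2, h12, h21, zero_mul, mul_zero, sub_zero, add_zero, zero_add, neg_zero]
  have w1 : η * a = a * η := (aη).symm
  have w1c : ∀ c : B, η * (a * c) = (a * η) * c := fun c => by rw [← mul_assoc, w1]
  have w2 : η * d = d * η := (dη).symm
  have w2c : ∀ c : B, η * (d * c) = (d * η) * c := fun c => by rw [← mul_assoc, w2]
  have w3 : η * β = -(β * η) := by rw [βη, neg_neg]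
  have w3c : ∀ c : B, η * (β * c) = (-(β * η)) * c := fun c => by rw [← mul_assoc, w3]
  have w4 : η * γ = -(γ * η) := by rw [γη, neg_neg]
  have w4c : ∀ c : B, η * (γ * c) = (-(γ * η)) * c := fun c => by rw [← mul_assoc, w4]
  have w5 : η * h1 = -(h1 * η) := by rw [h1η, neg_neg]
  have w5c : ∀ c : B, η * (h1 * c) = (-(h1 * η)) * c := fun c => by rw [← mul_assoc, w5]
  have w6 : η * h2 = -(h2 * η) := by rw [h2η, neg_neg]
  have w6c : ∀ c : B, η * (h2 * c) = (-(h2 * η)) * c := fun c => by rw [← mul_assoc, w6]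
  have w7 : η * η = -(h2 * (η * y)) := by rw [p1, mul_assoc]
  have w7c : ∀ c : B, η * (η * c) = (-(h2 * (η * y))) * c := fun c => by rw [← mul_assoc, w7]
  have w8 : y * a = a * y := (ay).symm
  have w8c : ∀ c : B, y * (a * c) = (a * y) * c := fun c => by rw [← mul_assoc, w8]
  have w9 : y * d = d * y := (dy).symm
  have w9c : ∀ c : B, y * (d * c) = (d * y) * c := fun c => by rw [← mul_assoc, w9]
  have w10 : y * β = β * y := (βy).symm
  have w10c : ∀ c : B, y * (β * c) = (β * y) * c := fun c => by rw [← mul_assoc, w10]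
  have w11 : y * γ = γ * y := (γy).symm
  have w11c : ∀ c : B, y * (γ * c) = (γ * y) * c := fun c => by rw [← mul_assoc, w11]
  have w12 : y * h1 = h1 * y := (h1y).symm
  have w12c : ∀ c : B, y * (h1 * c) = (h1 * y) * c := fun c => by rw [← mul_assoc, w12]
  have w13 : y * h2 = h2 * y := (h2y).symm
  have w13c : ∀ c : B, y * (h2 * c) = (h2 * y) * c := fun c => by rw [← mul_assoc, w13]
  have w14 : y * η = η * y + h2 * (y * y) := by rw [p2]; noncomm_ring
  have w14c : ∀ c : B, y * (η * c) = (η * y + h2 * (y * y)) * c := fun c => by rw [← mul_assoc, w14]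
  have w15 : a * h1 = h1 * a := (h1a).symm
  have w15c : ∀ c : B, a * (h1 * c) = (h1 * a) * c := fun c => by rw [← mul_assoc, w15]
  have w16 : a * h2 = h2 * a := (h2a).symm
  have w16c : ∀ c : B, a * (h2 * c) = (h2 * a) * c := fun c => by rw [← mul_assoc, w16]
  have w17 : d * h1 = h1 * d := (h1d).symm
  have w17c : ∀ c : B, d * (h1 * c) = (h1 * d) * c := fun c => by rw [← mul_assoc, w17]
  have w18 : d * h2 = h2 * d := (h2d).symm
  have w18c : ∀ c : B, d * (h2 * c) = (h2 * d) * c := fun c => by rw [← mul_assoc, w18]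
  have w19 : β * h1 = -(h1 * β) := by rw [h1β, neg_neg]
  have w19c : ∀ c : B, β * (h1 * c) = (-(h1 * β)) * c := fun c => by rw [← mul_assoc, w19]
  have w20 : β * h2 = -(h2 * β) := by rw [h2β, neg_neg]
  have w20c : ∀ c : B, β * (h2 * c) = (-(h2 * β)) * c := fun c => by rw [← mul_assoc, w20]
  have w21 : γ * h1 = -(h1 * γ) := by rw [h1γ, neg_neg]
  have w21c : ∀ c : B, γ * (h1 * c) = (-(h1 * γ)) * c := fun c => by rw [← mul_assoc, w21]
  have w22 : γ * h2 = -(h2 * γ) := by rw [h2γ, neg_neg]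
  have w22c : ∀ c : B, γ * (h2 * c) = (-(h2 * γ)) * c := fun c => by rw [← mul_assoc, w22]
  have w23 : h1 * h1 = 0 := hh1
  have w23c : ∀ c : B, h1 * (h1 * c) = (0) * c := fun c => by rw [← mul_assoc, w23]
  have w24 : h2 * h2 = 0 := hh2
  have w24c : ∀ c : B, h2 * (h2 * c) = (0) * c := fun c => by rw [← mul_assoc, w24]
  have w25 : h1 * h2 = 0 := h12
  have w25c : ∀ c : B, h1 * (h2 * c) = (0) * c := fun c => by rw [← mul_assoc, w25]
  have w26 : h2 * h1 = 0 := h21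
  have w26c : ∀ c : B, h2 * (h1 * c) = (0) * c := fun c => by rw [← mul_assoc, w26]
  have w27 : a * β = β * a - h2 * (a * a) - h2 * (γ * β) + h2 * (d * a) := by rw [r1, show h2 * (a * a - β * γ - a * d) = h2 * (a * a) - h2 * (β * γ) - h2 * (a * d) from by noncomm_ring, q7, q32]; noncomm_ring
  have w27c : ∀ c : B, a * (β * c) = (β * a - h2 * (a * a) - h2 * (γ * β) + h2 * (d * a)) * c := fun c => by rw [← mul_assoc, w27]
  have w28 : d * β = β * d + h2 * (d * d) - h2 * (γ * β) - h2 * (d * a) := by rw [r2, show h2 * (d * d + β * γ - d * a) = h2 * (d * d) + h2 * (β * γ) - h2 * (d * a) from by noncomm_ring, q7]; noncomm_ring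
  have w28c : ∀ c : B, d * (β * c) = (β * d + h2 * (d * d) - h2 * (γ * β) - h2 * (d * a)) * c := fun c => by rw [← mul_assoc, w28]
  have w29 : a * γ = γ * a + h1 * (a * a) + h1 * (γ * β) - h1 * (d * a) := by rw [r3, show h1 * (a * a + γ * β - a * d) = h1 * (a * a) + h1 * (γ * β) - h1 * (a * d) from by noncomm_ring, q31]; noncomm_ring
  have w29c : ∀ c : B, a * (γ * c) = (γ * a + h1 * (a * a) + h1 * (γ * β) - h1 * (d * a)) * c := fun c => by rw [← mul_assoc, w29]
  have w30 : d * γ = γ * d - h1 * (d * d) + h1 * (γ * β) + h1 * (d * a) := by rw [r4]; noncomm_ring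
  have w30c : ∀ c : B, d * (γ * c) = (γ * d - h1 * (d * d) + h1 * (γ * β) + h1 * (d * a)) * c := fun c => by rw [← mul_assoc, w30]
  have w31 : β * β = h2 * (β * a) - h2 * (β * d) := by rw [r5]; noncomm_ring
  have w31c : ∀ c : B, β * (β * c) = (h2 * (β * a) - h2 * (β * d)) * c := fun c => by rw [← mul_assoc, w31]
  have w32 : γ * γ = h1 * (γ * d) - h1 * (γ * a) := by rw [r6]; noncomm_ring
  have w32c : ∀ c : B, γ * (γ * c) = (h1 * (γ * d) - h1 * (γ * a)) * c := fun c => by rw [← mul_assoc, w32]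
  have w33 : β * γ = -(γ * β) + h1 * (β * d) - h1 * (β * a) - h2 * (γ * d) + h2 * (γ * a) := by rw [r7]; noncomm_ring
  have w33c : ∀ c : B, β * (γ * c) = (-(γ * β) + h1 * (β * d) - h1 * (β * a) - h2 * (γ * d) + h2 * (γ * a)) * c := fun c => by rw [← mul_assoc, w33]
  have w34 : a * d = d * a + h1 * (β * a) - h1 * (β * d) + h2 * (γ * a) - h2 * (γ * d) := by rw [r8, show h2 * (a - d) * γ = h2 * (a * γ) - h2 * (d * γ) from by noncomm_ring, q29, q30]; noncomm_ring
  have w34c : ∀ c : B, a * (d * c) = (d * a + h1 * (β * a) - h1 * (β * d) + h2 * (γ * a) - h2 * (γ * d)) * c := fun c => by rw [← mul_assoc, w34]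
  refine ⟨?_, ?_⟩ <;>
  · simp only [sub_eq_add_neg, mul_add, add_mul, mul_neg, neg_mul, neg_neg, neg_add,
      mul_zero, zero_mul, add_zero, zero_add, neg_zero, mul_assoc, w1, w1c, w2, w2c, w3, w3c, w4, w4c, w5, w5c, w6, w6c, w7, w7c, w8, w8c, w9, w9c, w10, w10c, w11, w11c, w12, w12c, w13, w13c, w14, w14c, w15, w15c, w16, w16c, w17, w17c, w18, w18c, w19, w19c, w20, w20c, w21, w21c, w22, w22c, w23, w23c, w24, w24c, w25, w25c, w26, w26c, w27, w27c, w28, w28c, w29, w29c, w30, w30c, w31, w31c, w32, w32c, w33, w33c, w34, w34c]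
    abel
end

section
/- Let p, q be nonzero complex numbers. Let B be an associative unital superalgebra over ℂ with even elements a, d and odd elements β, γ satisfying the GL_{p,q}(1|1) relations: aβ = qβa, aγ = pγa, β² = 0, dβ = qβd, dγ = pγd, γ² = 0, βγ + pq⁻¹γβ = 0, ad = da + (p − q⁻¹)γβ. Let R_{p,q} be the 4×4 matrix over ℂ with rows (q,0,0,0), (0,qp⁻¹,0,0), (0,q−p⁻¹,1,0), (0,0,0,p⁻¹), and define the graded tensor embeddings (T₁)^{ij}_{kl} = (−1)^{k(j+l)} T^i_k δ^j_l and (T₂)^{ij}_{kl} = (−1)^{i(j+l)} T^j_l δ^i_k, where T is the 2×2 matrix with entries T⁰₀ = a, T⁰₁ = β, T¹₀ = γ, T¹₁ = d and indices 0, 1 have parities 0, 1. Then all 16 entries of the 4×4 matrix equation R_{p,q} T₁ T₂ = T₂ T₁ R_{p,q} hold in B. -/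
noncomputable section

set_option maxHeartbeats 4000000 in
/-- the GL_{p,q}(1|1) relations (3) imply the RTT equation
`R_{p,q} T₁ T₂ = T₂ T₁ R_{p,q}` with the graded conventions (6)-(7). -/
theorem stmt_13 (p q : ℂ) (hp : p ≠ 0) (hq : q ≠ 0)
    (B : Type*) [Ring B] [Algebra ℂ B] (a d β γ : B)
    (r1 : a * β = q • (β * a)) (r2 : a * γ = p • (γ * a))
    (r3 : β * β = 0)
    (r4 : d * β = q • (β * d)) (r5 : d * γ = p • (γ * d))
    (r6 : γ * γ = 0)
    (r7 : β * γ + (p * q⁻¹) • (γ * β) = 0)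
    (r8 : a * d = d * a + (p - q⁻¹) • (γ * β)) :
    let T : Matrix (Fin 2) (Fin 2) B := !![a, β; γ, d]
    let T1 : Matrix (Fin 2 × Fin 2) (Fin 2 × Fin 2) B :=
      Matrix.of fun i k =>
        (-1 : B) ^ (k.1.val * (i.2.val + k.2.val)) *
          (if i.2 = k.2 then T i.1 k.1 else 0)
    let T2 : Matrix (Fin 2 × Fin 2) (Fin 2 × Fin 2) B :=
      Matrix.of fun i k =>
        (-1 : B) ^ (i.1.val * (i.2.val + k.2.val)) *
          (if i.1 = k.1 then T i.2 k.2 else 0)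
    let R : Matrix (Fin 2 × Fin 2) (Fin 2 × Fin 2) B :=
      Matrix.of fun i j =>
        algebraMap ℂ B
          (!![q, 0, 0, 0;
              0, q * p⁻¹, 0, 0;
              0, q - p⁻¹, 1, 0;
              0, 0, 0, p⁻¹] (pr i.1 i.2) (pr j.1 j.2))
    R * T1 * T2 = T2 * T1 * R := by
  intro T T1 T2 R
  have h7 : β * γ = -((p * q⁻¹) • (γ * β)) := eq_neg_of_add_eq_zero_left r7
  ext ⟨i,j⟩ ⟨k,l⟩
  fin_cases i <;> fin_cases j <;> fin_cases k <;> fin_cases l <;>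
    simp [T, T1, T2, R, Matrix.mul_apply, Fintype.sum_prod_type, Fin.sum_univ_two, pr,
      Matrix.vecHead, Matrix.vecTail, Algebra.algebraMap_eq_smul_one, mul_smul_comm,
      smul_mul_assoc, smul_smul, smul_sub, sub_smul, smul_add, sub_mul, mul_sub] <;>
    simp only [r1, r2, r3, r4, r5, r6, r8, h7, smul_neg, smul_zero, neg_zero, mul_zero,
      zero_mul, smul_smul, smul_add, smul_sub, mul_smul_comm, smul_mul_assoc, add_zero,
      zero_add, neg_neg] <;>
    (try match_scalars) <;> (try field_simp) <;> ring_nf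
end
end

section
/- Let B be an associative unital ℂ-superalgebra with odd elements h₁, h₂ (h₁² = h₂² = 0, h₁h₂ = 0 = h₂h₁) and even elements a, d, odd elements β, γ, with h₁, h₂ anticommuting with β, γ and commuting with a, d. Let R_{h₁,h₂} be the 4×4 matrix (over the sub-superalgebra generated by h₁, h₂) with rows (1,−h₂,h₂,0), (−h₁,1,0,h₂), (h₁,0,1,h₂), (0,h₁,h₁,1), and define T₁, T₂ by the graded conventions (T₁)^{ij}_{kl} = (−1)^{k(j+l)} T^i_k δ^j_l, (T₂)^{ij}_{kl} = (−1)^{i(j+l)} T^j_l δ^i_k with T = (a, β; γ, d). Then the RTT equation R_{h₁,h₂} T₁ T₂ = T₂ T₁ R_{h₁,h₂} holds if and only if the relations (17) (with h₁h₂ = 0) hold: aβ = βa − h₂(a² − βγ − ad); dβ = βd + h₂(d² + βγ − da); aγ = γa + h₁(a² + γβ − ad); dγ = γd − h₁(d² − γβ − da); β² = h₂β(a−d); γ² = h₁γ(d−a); βγ = −γβ + (h₁β − h₂γ)(d−a); ad = da + h₁β(a−d) + h₂(a−d)γ. -/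
noncomputable section

private lemma half_cancel {B : Type*} [Ring B] [Algebra ℂ B] {x y : B}
    (h : 2 * x = 2 * y) : x = y := by
  have h2 : (2 : ℂ) • x = (2 : ℂ) • y := by
    rw [Algebra.smul_def, Algebra.smul_def, map_ofNat]; exact h
  have := congrArg (fun z => ((2 : ℂ)⁻¹) • z) h2
  simpa [smul_smul] using this

set_option maxHeartbeats 4000000 in
/-- the RTT equation `R_{h₁,h₂} T₁ T₂ = T₂ T₁ R_{h₁,h₂}`
(with `h₁h₂ = 0`) holds iff the relations (17) hold. -/
theorem stmt_14 (B : Type*) [Ring B] [Algebra ℂ B]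
    (h1 h2 a d β γ : B)
    (hh1 : h1 * h1 = 0) (hh2 : h2 * h2 = 0)
    (h12 : h1 * h2 = 0) (h21 : h2 * h1 = 0)
    (h1β : h1 * β = -(β * h1)) (h1γ : h1 * γ = -(γ * h1))
    (h2β : h2 * β = -(β * h2)) (h2γ : h2 * γ = -(γ * h2))
    (h1a : h1 * a = a * h1) (h1d : h1 * d = d * h1)
    (h2a : h2 * a = a * h2) (h2d : h2 * d = d * h2) :
    let T : Matrix (Fin 2) (Fin 2) B := !![a, β; γ, d]
    let T1 : Matrix (Fin 2 × Fin 2) (Fin 2 × Fin 2) B :=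
      Matrix.of fun i k =>
        (-1 : B) ^ (k.1.val * (i.2.val + k.2.val)) *
          (if i.2 = k.2 then T i.1 k.1 else 0)
    let T2 : Matrix (Fin 2 × Fin 2) (Fin 2 × Fin 2) B :=
      Matrix.of fun i k =>
        (-1 : B) ^ (i.1.val * (i.2.val + k.2.val)) *
          (if i.1 = k.1 then T i.2 k.2 else 0)
    let R : Matrix (Fin 2 × Fin 2) (Fin 2 × Fin 2) B :=
      Matrix.of fun i j =>
        (!![(1 : B), -h2, h2, 0;
            -h1, 1, 0, h2;
            h1, 0, 1, h2;
            0, h1, h1, 1] (pr i.1 i.2) (pr j.1 j.2))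
    (R * T1 * T2 = T2 * T1 * R) ↔
      (a * β = β * a - h2 * (a * a - β * γ - a * d) ∧
       d * β = β * d + h2 * (d * d + β * γ - d * a) ∧
       a * γ = γ * a + h1 * (a * a + γ * β - a * d) ∧
       d * γ = γ * d - h1 * (d * d - γ * β - d * a) ∧
       β * β = h2 * β * (a - d) ∧
       γ * γ = h1 * γ * (d - a) ∧
       β * γ = -(γ * β) + (h1 * β - h2 * γ) * (d - a) ∧
       a * d = d * a + h1 * β * (a - d) + h2 * (a - d) * γ) := by
  intro T T1 T2 R
  constructor
  · intro hEq
    have E : ∀ i j, (R * T1 * T2) i j = (T2 * T1 * R) i j := fun i j => by rw [hEq]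
    have e00 := E (0,0) (0,0)
    have e01 := E (0,0) (0,1)
    have e02 := E (0,0) (1,0)
    have e03 := E (0,0) (1,1)
    have e10 := E (0,1) (0,0)
    have e11 := E (0,1) (0,1)
    have e12 := E (0,1) (1,0)
    have e13 := E (0,1) (1,1)
    have e20 := E (1,0) (0,0)
    have e21 := E (1,0) (0,1)
    have e22 := E (1,0) (1,0)
    have e23 := E (1,0) (1,1)
    have e30 := E (1,1) (0,0)
    have e31 := E (1,1) (0,1)
    have e32 := E (1,1) (1,0)
    have e33 := E (1,1) (1,1)
    simp only [Matrix.mul_apply, Fintype.sum_prod_type, Fin.sum_univ_two, T, T1, T2, R, Matrix.of_apply, pr] at e00 e01 e02 e03 e10 e11 e12 e13 e20 e21 e22 e23 e30 e31 e32 e33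
    norm_num at e00 e01 e02 e03 e10 e11 e12 e13 e20 e21 e22 e23 e30 e31 e32 e33
    refine ⟨?_, ?_, ?_, ?_, ?_, ?_, ?_, ?_⟩ <;> apply half_cancel
    · linear_combination (norm := noncomm_ring) (-2) * e02 + (1) * h1 * e03 + (-2) * h2 * e11 + (-1) * h12 * a * β + (-1) * h12 * β * a + (1) * h12 * β * d + (1) * h12 * d * β + (-2) * h2 * h1d * β + (2) * h1β * β + (-2) * β * h1β + (-2) * h2 * d * h1β + (-2) * h21 * a * β + (2) * h21 * d * β + (2) * h2a * a + (2) * a * h2a + (1) * h1 * h2a * β + (-1) * h1 * β * h2a + (-2) * h2 * γ * h2a + (1) * h1 * h2β * a + (1) * h1 * a * h2β + (2) * h2 * h2γ * a + (-2) * hh2 * γ * a + (2) * hh2 * γ * d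
    · linear_combination (norm := noncomm_ring) (-2) * e01 + (-2) * e02 + (1) * h1 * e03 + (-2) * h2 * e11 + (-2) * e13 + (-1) * h12 * a * β + (-1) * h12 * β * a + (1) * h12 * β * d + (1) * h12 * d * β + (-2) * h2 * h1d * β + (4) * h1β * β + (-4) * β * h1β + (-2) * h2 * d * h1β + (-2) * h21 * a * β + (2) * h21 * d * β + (2) * d * h2a + (1) * h1 * h2a * β + (-1) * h1 * β * h2a + (-2) * h2 * γ * h2a + (2) * h2d * a + (-2) * γ * h2β + (1) * h1 * h2β * a + (1) * h1 * a * h2β + (2) * h2γ * β + (2) * h2 * h2γ * a + (-2) * hh2 * γ * a + (2) * hh2 * γ * d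
    · linear_combination (norm := noncomm_ring) (1) * e10 + (1) * h1 * e11 + (1) * h1 * e12 + (-1) * e20 + (1) * h12 * d * γ + (-1) * h12 * γ * d + (1) * h1a * d + (1) * d * h1a + (1) * h1d * a + (1) * a * h1d + (2) * h1 * h1d * β + (1) * h1β * γ + (1) * γ * h1β + (2) * h1 * d * h1β + (-1) * h1γ * β + (-1) * β * h1γ + (1) * hh1 * a * β + (1) * hh1 * β * a + (-2) * hh1 * d * β
    · linear_combination (norm := noncomm_ring) (-1) * e10 + (1) * h1 * e11 + (1) * h1 * e12 + (-1) * e20 + (-2) * e31 + (1) * h12 * d * γ + (-1) * h12 * γ * d + (1) * h1a * d + (-1) * d * h1a + (-1) * h1d * a + (2) * h1d * d + (1) * a * h1d + (2) * d * h1d + (2) * h1 * h1d * β + (1) * h1β * γ + (-1) * γ * h1β + (2) * h1 * d * h1β + (1) * h1γ * β + (-1) * β * h1γ + (2) * h2γ * γ + (-2) * γ * h2γ + (1) * hh1 * a * β + (1) * hh1 * β * a + (-2) * hh1 * d * β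
    · linear_combination (norm := noncomm_ring) (1) * h2 * e01 + (-1) * e03 + (1) * h2 * e13 + (-1) * h2 * h1β * β + (1) * h2 * β * h1β + (-1) * h2a * β + (1) * β * h2a + (1) * h2 * h2a * a + (1) * h2 * a * h2a + (-1) * h2 * d * h2a + (-1) * h2 * h2d * a + (-1) * h2β * a + (-1) * a * h2β + (1) * h2 * γ * h2β + (-1) * h2 * h2γ * β + (-1) * hh2 * a * a + (1) * hh2 * a * d + (1) * hh2 * d * a + (-1) * hh2 * d * d
    · linear_combination (norm := noncomm_ring) (-1) * h1 * e10 + (1) * e30 + (-1) * h1 * e31 + (-1) * h1 * d * h1a + (-1) * h1d * γ + (1) * γ * h1d + (-1) * h1 * h1d * a + (1) * h1 * h1d * d + (1) * h1 * d * h1d + (-1) * h1 * γ * h1β + (-1) * h1γ * d + (-1) * d * h1γ + (1) * h1 * h1γ * β + (1) * h1 * h2γ * γ + (-1) * h1 * γ * h2γ + (-1) * hh1 * a * a + (1) * hh1 * a * d + (1) * hh1 * d * a + (-1) * hh1 * d * d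
    · linear_combination (norm := noncomm_ring) (-2) * e00 + (2) * e21 + (-2) * h1a * β + (-2) * β * h1a + (2) * β * h1d + (2) * h1β * a + (-2) * h1β * d + (-2) * a * h1β + (-2) * h2a * γ + (-2) * a * h2γ
    · linear_combination (norm := noncomm_ring) (4) * e00 + (2) * e11 + (-2) * e12 + (-2) * e21 + (4) * h1a * β + (4) * β * h1a + (-2) * β * h1d + (-4) * h1β * a + (2) * h1β * d + (4) * a * h1β + (2) * h2a * γ + (4) * γ * h2a + (-4) * h2γ * a + (2) * a * h2γ
  · rintro ⟨r1, r2, r3, r4, r5, r6, r7, r8⟩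
    ext ⟨i1, i2⟩ ⟨j1, j2⟩
    fin_cases i1 <;> fin_cases i2 <;> fin_cases j1 <;> fin_cases j2 <;>
      simp only [Matrix.mul_apply, Fintype.sum_prod_type, Fin.sum_univ_two, T, T1, T2, R, Matrix.of_apply, pr] <;>
      norm_num <;> apply half_cancel
    · linear_combination (norm := noncomm_ring) (2) * h1 * r1 + (-2) * h2 * r3 + (-2) * h12 * a * a + (2) * h12 * a * d + (2) * h12 * β * γ + (-2) * h1a * β + (-2) * β * h1a + (2) * h1β * a + (-2) * a * h1β + (-2) * h21 * a * a + (2) * h21 * a * d + (-2) * h21 * γ * β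
    · linear_combination (norm := noncomm_ring) (2) * r1 + (-2) * h1 * r5 + (2) * h2 * r7 + (-2) * h12 * β * a + (2) * h12 * β * d + (2) * h1β * β + (-2) * β * h1β + (-2) * h21 * β * a + (2) * h21 * β * d + (-2) * h2a * a + (-2) * a * h2a + (2) * hh2 * γ * a + (-2) * hh2 * γ * d
    · linear_combination (norm := noncomm_ring) (-2) * r1 + (-2) * h1 * r5 + (-2) * h2 * r8 + (-2) * h12 * β * a + (2) * h12 * β * d + (2) * h1β * β + (-2) * β * h1β + (-2) * h21 * β * a + (2) * h21 * β * d + (2) * h2a * a + (2) * a * h2a + (-2) * hh2 * a * γ + (2) * hh2 * d * γ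
    · linear_combination (norm := noncomm_ring) (2) * h2 * r1 + (-2) * h2 * r2 + (-4) * r5 + (-2) * h2a * β + (2) * β * h2a + (-2) * h2β * a + (-2) * a * h2β + (-2) * hh2 * a * a + (2) * hh2 * a * d + (2) * hh2 * d * a + (-2) * hh2 * d * d
    · linear_combination (norm := noncomm_ring) (2) * r3 + (2) * h2 * r6 + (-2) * h1 * r8 + (-2) * h12 * a * γ + (2) * h12 * d * γ + (-2) * d * h1a + (-2) * h1d * a + (-2) * γ * h1β + (2) * h1γ * β + (-2) * h21 * γ * a + (2) * h21 * γ * d + (-2) * hh1 * β * a + (2) * hh1 * β * d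
    · linear_combination (norm := noncomm_ring) (-2) * h1 * r1 + (2) * h1 * r2 + (2) * h2 * r3 + (-2) * h2 * r4 + (2) * r8 + (2) * h12 * a * a + (-2) * h12 * a * d + (-2) * h12 * d * a + (2) * h12 * d * d + (-2) * h1d * β + (-2) * d * h1β + (2) * h21 * a * a + (-2) * h21 * a * d + (-2) * h21 * d * a + (2) * h21 * d * d + (-2) * γ * h2a + (2) * h2γ * a
    · linear_combination (norm := noncomm_ring) (2) * h1 * r2 + (-2) * h2 * r4 + (-2) * r7 + (2) * h12 * β * γ + (-2) * h12 * d * a + (2) * h12 * d * d + (-2) * h1d * β + (-2) * d * h1β + (-2) * h21 * d * a + (2) * h21 * d * d + (-2) * h21 * γ * β + (2) * γ * h2a + (-2) * h2γ * a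
    · linear_combination (norm := noncomm_ring) (-2) * r2 + (2) * h1 * r5 + (-2) * h2 * r7 + (2) * h12 * β * a + (-2) * h12 * β * d + (2) * h21 * β * a + (-2) * h21 * β * d + (2) * d * h2a + (2) * h2d * a + (-2) * γ * h2β + (2) * h2γ * β + (-2) * hh2 * γ * a + (2) * hh2 * γ * d
    · linear_combination (norm := noncomm_ring) (-2) * r3 + (2) * h2 * r6 + (-2) * h1 * r7 + (-2) * h12 * γ * a + (2) * h12 * γ * d + (2) * h1a * d + (2) * a * h1d + (2) * h1β * γ + (-2) * β * h1γ + (-2) * h21 * γ * a + (2) * h21 * γ * d + (2) * hh1 * β * a + (-2) * hh1 * β * d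
    · linear_combination (norm := noncomm_ring) (2) * h1 * r1 + (-2) * h2 * r3 + (2) * r7 + (-2) * h12 * a * a + (2) * h12 * a * d + (2) * h12 * β * γ + (-2) * β * h1d + (2) * h1β * d + (-2) * h21 * a * a + (2) * h21 * a * d + (-2) * h21 * γ * β + (2) * h2a * γ + (2) * a * h2γ
    · linear_combination (norm := noncomm_ring) (-2) * r8 + (-2) * β * h1d + (2) * h1β * d + (-2) * h2a * γ + (-2) * a * h2γ
    · linear_combination (norm := noncomm_ring) (-2) * r2 + (-2) * h1 * r5 + (-2) * h2 * r8 + (-2) * h12 * β * a + (2) * h12 * β * d + (-2) * h21 * β * a + (2) * h21 * β * d + (2) * h2a * d + (2) * a * h2d + (-2) * h2β * γ + (2) * β * h2γ + (-2) * hh2 * a * γ + (2) * hh2 * d * γ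
    · linear_combination (norm := noncomm_ring) (2) * h1 * r3 + (-2) * h1 * r4 + (4) * r6 + (2) * h1d * γ + (-2) * γ * h1d + (2) * h1γ * d + (2) * d * h1γ + (2) * hh1 * a * a + (-2) * hh1 * a * d + (-2) * hh1 * d * a + (2) * hh1 * d * d
    · linear_combination (norm := noncomm_ring) (-2) * r4 + (-2) * h2 * r6 + (2) * h1 * r8 + (2) * h12 * a * γ + (-2) * h12 * d * γ + (2) * h1d * d + (2) * d * h1d + (2) * h21 * γ * a + (-2) * h21 * γ * d + (2) * h2γ * γ + (-2) * γ * h2γ + (2) * hh1 * β * a + (-2) * hh1 * β * d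
    · linear_combination (norm := noncomm_ring) (-2) * r4 + (2) * h2 * r6 + (-2) * h1 * r7 + (-2) * h12 * γ * a + (2) * h12 * γ * d + (2) * h1d * d + (2) * d * h1d + (-2) * h21 * γ * a + (2) * h21 * γ * d + (-2) * h2γ * γ + (2) * γ * h2γ + (2) * hh1 * β * a + (-2) * hh1 * β * d
    · linear_combination (norm := noncomm_ring) (-2) * h1 * r2 + (2) * h2 * r4 + (-2) * h12 * β * γ + (2) * h12 * d * a + (-2) * h12 * d * d + (2) * h21 * d * a + (-2) * h21 * d * d + (2) * h21 * γ * β + (-2) * h2d * γ + (-2) * γ * h2d + (2) * h2γ * d + (-2) * d * h2γ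
end
end
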